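/- arXiv:2203.07061 — 7 statements merged into one kernel-verified Lean document; each statement's English description precedes it below -/
import Mathlib

section
/- Let f ∈ ℤ[x] be a monic polynomial with f(0) ≠ 0 such that every complex root of f has absolute value at most 1. Then every complex root of f is a root of unity. -/
open Polynomial

theorem Polynomial.isRoot_map_intCastRingHom_iff {A : Type*} [Ring A] (f : ℤ[X]) (a : A) :
    (f.map (Int.castRingHom A)).IsRoot a ↔ aeval a f = 0 := by
  rw [IsRoot, ← eval_map_algebraMap, algebraMap_int_eq]

/-- Every embedding `K →+* A` is an `ℤ`-algebra map, so the conjugates of `x` are roots of `f`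
and Kronecker's theorem `Embeddings.pow_eq_one_of_norm_le_one` applies. -/
theorem NumberField.pow_eq_one_of_aeval_eq_zero {K A : Type*} [Field K] [NumberField K]
    [NormedField A] [IsAlgClosed A] [NormedAlgebra ℚ A] {f : ℤ[X]} (hmonic : f.Monic)
    (h0 : f.eval 0 ≠ 0) (hroots : ∀ a : A, aeval a f = 0 → ‖a‖ ≤ 1) {x : K} (hx : aeval x f = 0) :
    ∃ n : ℕ, 0 < n ∧ x ^ n = 1 := by
  have hx0 : x ≠ 0 := by
    rintro rfl
    apply h0
    have hcoeff := (coeff_zero_eq_aeval_zero' (A := K) f).trans hx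
    rwa [eq_intCast, Int.cast_eq_zero, coeff_zero_eq_eval_zero] at hcoeff
  obtain ⟨n, hn, hxn⟩ := Embeddings.pow_eq_one_of_norm_le_one K A hx0 ⟨f, hmonic, hx⟩ fun φ ↦
    hroots _ ((aeval_algHom_apply φ.toIntAlgHom x f).trans (by rw [hx, map_zero]))
  exact ⟨n, hn, hxn⟩

/-- Kronecker's theorem: a monic integer polynomial with nonzero constant term
whose complex roots all lie in the closed unit disk has only roots of unity as roots. -/
theorem kronecker (f : Polynomial ℤ) (hmonic : f.Monic) (h0 : f.eval 0 ≠ 0)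
    (hroots : ∀ z : ℂ, (f.map (Int.castRingHom ℂ)).IsRoot z → ‖z‖ ≤ 1) :
    ∀ z : ℂ, (f.map (Int.castRingHom ℂ)).IsRoot z → ∃ n : ℕ, 0 < n ∧ z ^ n = 1 := by
  intro z hz
  simp only [isRoot_map_intCastRingHom_iff] at hroots hz
  have hzQ : IsIntegral ℚ z := IsIntegral.tower_top (R := ℤ) ⟨f, hmonic, hz⟩
  let K := IntermediateField.adjoin ℚ {z}
  have : NumberField K := { to_finiteDimensional := IntermediateField.adjoin.finiteDimensional hzQ }
  let x : K := IntermediateField.AdjoinSimple.gen ℚ z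
  have hx : aeval x f = 0 := by
    apply FaithfulSMul.algebraMap_injective K ℂ
    rw [← aeval_algebraMap_apply, IntermediateField.AdjoinSimple.algebraMap_gen, hz, map_zero]
  obtain ⟨n, hn, hxn⟩ := NumberField.pow_eq_one_of_aeval_eq_zero hmonic h0 hroots hx
  refine ⟨n, hn, ?_⟩
  simpa [x] using congrArg (algebraMap K ℂ) hxn
end

section
/- There is no monic polynomial f ∈ ℤ[x] of degree 5 with constant coefficient ±1 such that (H1) f has at least four distinct roots of maximal modulus among all roots of f, and (H2) no quotient of two distinct roots of f is a root of unity. -/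
/-!
Let `r` be the common modulus of the four dominant roots and `e` the fifth root. As the constant
coefficient is `±1`, `‖e‖ * r ^ 4 = 1`, and `‖e‖ ≤ r` forces `r ≥ 1`.

If `r = 1`, all roots lie on the unit circle, so by Kronecker's theorem they are roots of unity, and
so is the quotient of two of them.

If `r > 1`, the constant coefficient of any proper monic factor of `f` vanishing at `e` would have
modulus at most `‖e‖ * r ^ 3 = r⁻¹ < 1`, so `f` is the minimal polynomial of `e`, and some
embedding `φ` of the splitting field of `f` sends `e` to a dominant root `a`. Applying `φ` to the
relation `e * ē * (a * ā) ^ 4 = ‖e‖ ^ 2 * r ^ 8 = 1` gives `r * ‖φ ē‖ * (‖φ a‖ * ‖φ ā‖) ^ 4 = 1`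
with each of the three norms equal to `r` or `r⁻⁴`; no such choice makes the power of `r` vanish.
-/

open Polynomial IntermediateField ComplexConjugate

theorem Multiset.exists_eq_cons_of_le_of_card_eq_add_one {α : Type*} {s t : Multiset α}
    (h : t ≤ s) (hcard : card s = card t + 1) : ∃ e, s = e ::ₘ t := by
  obtain ⟨u, rfl⟩ := Multiset.le_iff_exists_add.mp h
  rw [card_add, add_right_inj] at hcard
  obtain ⟨e, rfl⟩ := card_eq_one.mp hcard
  exact ⟨e, by rw [add_comm, singleton_add]⟩

theorem mul_mul_mul_pow_ne_one {r : ℝ} (hr : 1 < r) {n : ℕ} (hn : 3 ≤ n) {x y z : ℝ}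
    (hx : x = r ∨ x = (r ^ n)⁻¹) (hy : y = r ∨ y = (r ^ n)⁻¹) (hz : z = r ∨ z = (r ^ n)⁻¹) :
    r * z * (x * y) ^ n ≠ 1 := by
  have hr0 : r ≠ 0 := by positivity
  have hexp : ∀ t, t = r ∨ t = (r ^ n)⁻¹ → ∃ k : ℤ, (k = 1 ∨ k = -n) ∧ t = r ^ k := by
    rintro t (ht | ht)
    · exact ⟨1, Or.inl rfl, by rw [ht, zpow_one]⟩
    · exact ⟨-n, Or.inr rfl, by rw [ht, zpow_neg, zpow_natCast]⟩
  obtain ⟨i, hi, rfl⟩ := hexp x hx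
  obtain ⟨j, hj, rfl⟩ := hexp y hy
  obtain ⟨k, hk, rfl⟩ := hexp z hz
  have hprod : r * r ^ k * (r ^ i * r ^ j) ^ n = r ^ (1 + k + (i + j) * n) := by
    rw [zpow_add₀ hr0, zpow_add₀ hr0, zpow_one, zpow_mul, zpow_natCast, zpow_add₀ hr0]
  rw [hprod, Ne, zpow_eq_one_iff_right₀ (by positivity) hr.ne']
  have hn' : (3 : ℤ) ≤ n := by exact_mod_cast hn
  rcases hi with rfl | rfl <;> rcases hj with rfl | rfl <;> rcases hk with rfl | rfl <;> nlinarith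

theorem Complex.mul_conj_mul_mul_conj_pow_eq_one {e a : ℂ} {n : ℕ} (h : ‖e‖ * ‖a‖ ^ n = 1) :
    e * conj e * (a * conj a) ^ n = 1 := by
  rw [mul_conj', mul_conj', ← pow_mul]
  norm_cast
  rw [mul_comm 2 n, pow_mul, ← mul_pow, h, one_pow]

namespace Polynomial

theorem aeval_ringHom_apply {K L : Type*} [Ring K] [Ring L] (φ : K →+* L) (f : ℤ[X]) (x : K) :
    aeval (φ x) f = φ (aeval x f) :=
  aeval_algHom_apply φ.toIntAlgHom x f

theorem norm_coeff_zero_eq_prod_norm_roots {p : ℂ[X]} (hp : p.Monic) :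
    ‖p.coeff 0‖ = (p.roots.map (‖·‖)).prod := by
  rw [(IsAlgClosed.splits p).coeff_zero_eq_prod_roots_of_monic hp, norm_mul, norm_pow, norm_neg,
    norm_one, one_pow, one_mul]
  exact map_multiset_prod (normHom : ℂ →*₀ ℝ) _

theorem Monic.card_aroots {f : ℤ[X]} (hf : f.Monic) :
    Multiset.card (f.aroots ℂ) = f.natDegree := by
  rw [aroots_def, IsAlgClosed.card_roots_eq_natDegree, hf.natDegree_map]

theorem Monic.mem_aroots_iff_isRoot {f : ℤ[X]} (hf : f.Monic) {w : ℂ} :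
    w ∈ f.aroots ℂ ↔ (f.map (Int.castRingHom ℂ)).IsRoot w := by
  rw [aroots_def, algebraMap_int_eq, mem_roots (hf.map _).ne_zero]

theorem conj_mem_aroots {f : ℤ[X]} {w : ℂ} (hw : w ∈ f.aroots ℂ) : conj w ∈ f.aroots ℂ :=
  mem_aroots.mpr ⟨(mem_aroots.mp hw).1, by rw [aeval_ringHom_apply, (mem_aroots.mp hw).2, map_zero]⟩

theorem algHom_mem_aroots {K : IntermediateField ℚ ℂ} (φ : K →ₐ[ℚ] ℂ) {f : ℤ[X]} {u : K}
    (hu : (u : ℂ) ∈ f.aroots ℂ) : φ u ∈ f.aroots ℂ := by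
  rw [mem_aroots] at hu ⊢
  have hu0 : aeval u f = 0 := K.val.injective <| by
    rw [map_zero, ← hu.2]
    exact (aeval_ringHom_apply K.val.toRingHom f u).symm
  exact ⟨hu.1, by rw [← φ.coe_toRingHom, aeval_ringHom_apply, hu0, map_zero]⟩

theorem exists_pow_eq_one_of_forall_norm_eq_one {f : ℤ[X]} (hf : f.Monic)
    (h : ∀ w ∈ f.aroots ℂ, ‖w‖ = 1) {z : ℂ} (hz : z ∈ f.aroots ℂ) : ∃ n, 0 < n ∧ z ^ n = 1 := by
  have hzf : aeval z f = 0 := (mem_aroots.mp hz).2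
  have : FiniteDimensional ℚ ℚ⟮z⟯ := adjoin.finiteDimensional (IsIntegral.tower_top ⟨f, hf, hzf⟩)
  have : NumberField ℚ⟮z⟯ := ⟨⟩
  have hx : algebraMap ℚ⟮z⟯ ℂ (AdjoinSimple.gen ℚ z) = z := AdjoinSimple.algebraMap_gen ℚ z
  have hxf : aeval (AdjoinSimple.gen ℚ z) f = 0 := by
    apply (algebraMap ℚ⟮z⟯ ℂ).injective
    rw [← aeval_algebraMap_apply, hx, hzf, map_zero]
  obtain ⟨n, hn, hxn⟩ := NumberField.Embeddings.pow_eq_one_of_norm_eq_one ℚ⟮z⟯ ℂ ⟨f, hf, hxf⟩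
    fun φ => h _ (mem_aroots.mpr ⟨hf.ne_zero, by rw [aeval_ringHom_apply, hxf, map_zero]⟩)
  exact ⟨n, hn, by rw [← hx, ← map_pow, hxn, map_one]⟩

theorem exists_div_pow_eq_one_of_forall_norm_eq_one {f : ℤ[X]} (hf : f.Monic)
    (h : ∀ w ∈ f.aroots ℂ, ‖w‖ = 1) {a b : ℂ} (ha : a ∈ f.aroots ℂ) (hb : b ∈ f.aroots ℂ) :
    ∃ n, 0 < n ∧ (a / b) ^ n = 1 := by
  obtain ⟨m, hm, ham⟩ := exists_pow_eq_one_of_forall_norm_eq_one hf h ha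
  obtain ⟨k, hk, hbk⟩ := exists_pow_eq_one_of_forall_norm_eq_one hf h hb
  refine ⟨m * k, Nat.mul_pos hm hk, ?_⟩
  rw [div_pow, pow_mul, ham, one_pow, mul_comm, pow_mul, hbk, one_pow, div_one]

theorem minpoly_eq_of_norm_mul_pow_lt_one {f : ℤ[X]} (hf : f.Monic) (h0 : f.coeff 0 ≠ 0)
    {z : ℂ} (hz : z ∈ f.aroots ℂ) {M : ℝ} (hM : 1 ≤ M) (hbound : ∀ w ∈ f.aroots ℂ, ‖w‖ ≤ M)
    (hsmall : ‖z‖ * M ^ (f.natDegree - 2) < 1) : minpoly ℤ z = f := by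
  have hzf : aeval z f = 0 := (mem_aroots.mp hz).2
  have hint : IsIntegral ℤ z := ⟨f, hf, hzf⟩
  set q := minpoly ℤ z
  have hqf : q ∣ f := minpoly.isIntegrallyClosed_dvd hint hzf
  refine (eq_of_monic_of_dvd_of_natDegree_le (minpoly.monic hint) hf hqf ?_).symm
  by_contra! hlt
  have hq0 : q.coeff 0 ≠ 0 := by
    obtain ⟨u, hu⟩ := hqf
    exact fun h => h0 (by rw [hu, mul_coeff_zero, h, zero_mul])
  have hzq : z ∈ q.aroots ℂ := mem_aroots.mpr ⟨minpoly.ne_zero hint, minpoly.aeval ℤ z⟩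
  have hqroots : q.aroots ℂ ≤ f.aroots ℂ := roots.le_of_dvd (hf.map _).ne_zero (map_dvd _ hqf)
  have hcard : Multiset.card ((q.aroots ℂ).erase z) ≤ f.natDegree - 2 := by
    rw [Multiset.card_erase_of_mem hzq, (minpoly.monic hint).card_aroots, Nat.pred_eq_sub_one]
    omega
  have hone : 1 ≤ ‖(q.map (algebraMap ℤ ℂ)).coeff 0‖ := by
    rw [coeff_map, eq_intCast, Complex.norm_intCast]
    exact_mod_cast Int.one_le_abs hq0
  refine hone.not_gt ?_
  rw [norm_coeff_zero_eq_prod_norm_roots ((minpoly.monic hint).map _), ← aroots_def,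
    ← Multiset.cons_erase hzq, Multiset.map_cons, Multiset.prod_cons]
  calc ‖z‖ * (((q.aroots ℂ).erase z).map (‖·‖)).prod
      ≤ ‖z‖ * M ^ (f.natDegree - 2) := by
        gcongr
        refine (Multiset.prod_map_le_pow_card (f := (normHom : ℂ →*₀ ℝ))
          (fun w _ => norm_nonneg w) fun w hw => ?_).trans (pow_le_pow_right₀ hM hcard)
        exact hbound w (Multiset.mem_of_le hqroots (Multiset.mem_of_mem_erase hw))
    _ < 1 := hsmall

theorem exists_algHom_adjoin_rootSet_apply_eq {f : ℤ[X]} (hf : f.Monic) {x y : ℂ}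
    (hx : minpoly ℤ x = f) (hy : y ∈ f.aroots ℂ) (hxK : x ∈ adjoin ℚ (f.rootSet ℂ)) :
    ∃ φ : adjoin ℚ (f.rootSet ℂ) →ₐ[ℚ] ℂ, φ ⟨x, hxK⟩ = y := by
  have hint : IsIntegral ℤ x := by
    by_contra h
    exact hf.ne_zero (hx ▸ minpoly.eq_zero h)
  refine exists_algHom_adjoin_of_splits_of_aeval (fun s hs => ⟨IsIntegral.tower_top
    ⟨f, hf, aeval_eq_zero_of_mem_rootSet hs⟩, IsAlgClosed.splits _⟩) hxK ?_
  rw [minpoly.isIntegrallyClosed_eq_field_fractions' ℚ hint, hx, aeval_map_algebraMap]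
  exact (mem_aroots.mp hy).2

section OneSmallRoot

variable {f : ℤ[X]} (hf : f.Monic) (h0 : IsUnit (f.coeff 0)) {e : ℂ} {s : Multiset ℂ} {r : ℝ}
  (hroots : f.aroots ℂ = e ::ₘ s) (hs : ∀ w ∈ s, ‖w‖ = r)
include hf h0 hroots hs

theorem Monic.norm_mul_pow_card_eq_one : ‖e‖ * r ^ Multiset.card s = 1 := by
  have := norm_coeff_zero_eq_prod_norm_roots (hf.map (algebraMap ℤ ℂ))
  rw [← aroots_def, hroots, Multiset.map_cons, Multiset.prod_cons, Multiset.map_congr rfl hs,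
    Multiset.map_const', Multiset.prod_replicate, coeff_map, eq_intCast, Complex.norm_intCast,
    ← Int.cast_abs, Int.isUnit_iff_abs_eq.mp h0, Int.cast_one] at this
  exact this.symm

theorem Monic.norm_eq_or_of_mem_aroots {w : ℂ} (hw : w ∈ f.aroots ℂ) :
    ‖w‖ = r ∨ ‖w‖ = (r ^ Multiset.card s)⁻¹ := by
  rcases Multiset.mem_cons.mp (hroots ▸ hw) with rfl | hw
  exacts [Or.inr (eq_inv_of_mul_eq_one_left (hf.norm_mul_pow_card_eq_one h0 hroots hs)),
    Or.inl (hs w hw)]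

theorem Monic.one_le_of_norm_le (hn : 0 < Multiset.card s) (he : ‖e‖ ≤ r) : 1 ≤ r := by
  obtain ⟨a, ha⟩ := Multiset.card_pos_iff_exists_mem.mp hn
  have hr0 : 0 ≤ r := hs a ha ▸ norm_nonneg a
  by_contra! hr
  have := mul_le_mul he (pow_le_one₀ (n := Multiset.card s) hr0 hr.le) (by positivity) hr0
  linarith [hf.norm_mul_pow_card_eq_one h0 hroots hs]

theorem Monic.minpoly_eq_of_one_lt (hn : 0 < Multiset.card s) (hr : 1 < r) :
    minpoly ℤ e = f := by
  refine minpoly_eq_of_norm_mul_pow_lt_one hf h0.ne_zero (hroots ▸ Multiset.mem_cons_self e s)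
    hr.le (fun w hw => ?_) ?_
  · rcases hf.norm_eq_or_of_mem_aroots h0 hroots hs hw with h | h
    · exact h.le
    · exact h.trans_le ((inv_le_one_of_one_le₀ (one_le_pow₀ hr.le)).trans hr.le)
  · rw [eq_inv_of_mul_eq_one_left (hf.norm_mul_pow_card_eq_one h0 hroots hs), ← hf.card_aroots,
      hroots, Multiset.card_cons, show Multiset.card s + 1 - 2 = Multiset.card s - 1 by omega,
      inv_mul_lt_iff₀ (by positivity), mul_one]
    exact pow_lt_pow_right₀ hr (by omega)

theorem Monic.card_le_two_of_one_lt (hr : 1 < r) : Multiset.card s ≤ 2 := by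
  by_contra! hn
  set n := Multiset.card s
  have hemem : e ∈ f.aroots ℂ := hroots ▸ Multiset.mem_cons_self e s
  obtain ⟨a, ha⟩ := Multiset.card_pos_iff_exists_mem.mp (by omega : 0 < n)
  have hamem : a ∈ f.aroots ℂ := hroots ▸ Multiset.mem_cons_of_mem ha
  have hK : ∀ w ∈ f.aroots ℂ, w ∈ adjoin ℚ (f.rootSet ℂ) :=
    fun w hw => subset_adjoin ℚ _ (Polynomial.mem_rootSet.mpr (mem_aroots.mp hw))
  let E : adjoin ℚ (f.rootSet ℂ) := ⟨e, hK e hemem⟩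
  let E' : adjoin ℚ (f.rootSet ℂ) := ⟨conj e, hK _ (conj_mem_aroots hemem)⟩
  let A : adjoin ℚ (f.rootSet ℂ) := ⟨a, hK a hamem⟩
  let A' : adjoin ℚ (f.rootSet ℂ) := ⟨conj a, hK _ (conj_mem_aroots hamem)⟩
  have hrel : E * E' * (A * A') ^ n = 1 := Subtype.ext <|
    Complex.mul_conj_mul_mul_conj_pow_eq_one (hs a ha ▸ hf.norm_mul_pow_card_eq_one h0 hroots hs)
  obtain ⟨φ, hφ⟩ : ∃ φ : adjoin ℚ (f.rootSet ℂ) →ₐ[ℚ] ℂ, φ E = a :=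
    exists_algHom_adjoin_rootSet_apply_eq hf (hf.minpoly_eq_of_one_lt h0 hroots hs (by omega) hr)
      hamem (hK e hemem)
  have hnorm {u : adjoin ℚ (f.rootSet ℂ)} (hu : (u : ℂ) ∈ f.aroots ℂ) :=
    hf.norm_eq_or_of_mem_aroots h0 hroots hs (algHom_mem_aroots φ hu)
  apply mul_mul_mul_pow_ne_one hr hn (hnorm (u := A) hamem)
    (hnorm (u := A') (conj_mem_aroots hamem)) (hnorm (u := E') (conj_mem_aroots hemem))
  have := congrArg (‖φ ·‖) hrel
  simp only [map_mul, map_pow, map_one, norm_mul, norm_pow, norm_one, hφ] at this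
  rwa [hs a ha] at this

end OneSmallRoot

end Polynomial

/-- No monic degree-5 integer polynomial with constant coefficient ±1 has at least four
distinct dominant roots while no quotient of two distinct roots is a root of unity. -/
theorem no_degree_5_candidate :
    ¬ ∃ f : Polynomial ℤ, f.Monic ∧ f.natDegree = 5 ∧
      (f.coeff 0 = 1 ∨ f.coeff 0 = -1) ∧
      (∃ a b c d : ℂ,
        a ≠ b ∧ a ≠ c ∧ a ≠ d ∧ b ≠ c ∧ b ≠ d ∧ c ≠ d ∧
        (f.map (Int.castRingHom ℂ)).IsRoot a ∧ (f.map (Int.castRingHom ℂ)).IsRoot b ∧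
        (f.map (Int.castRingHom ℂ)).IsRoot c ∧ (f.map (Int.castRingHom ℂ)).IsRoot d ∧
        (∀ μ : ℂ, (f.map (Int.castRingHom ℂ)).IsRoot μ → ‖μ‖ ≤ ‖a‖) ∧
        (∀ μ : ℂ, (f.map (Int.castRingHom ℂ)).IsRoot μ → ‖μ‖ ≤ ‖b‖) ∧
        (∀ μ : ℂ, (f.map (Int.castRingHom ℂ)).IsRoot μ → ‖μ‖ ≤ ‖c‖) ∧
        (∀ μ : ℂ, (f.map (Int.castRingHom ℂ)).IsRoot μ → ‖μ‖ ≤ ‖d‖)) ∧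
      (∀ lam mu : ℂ, (f.map (Int.castRingHom ℂ)).IsRoot lam →
        (f.map (Int.castRingHom ℂ)).IsRoot mu → lam ≠ mu →
        ∀ n : ℕ, 0 < n → (lam / mu) ^ n ≠ 1) := by
  rintro ⟨f, hf, hdeg, hc0, ⟨a, b, c, d, hab, hac, had, hbc, hbd, hcd, ha, hb, hc, hd,
    hdoma, hdomb, hdomc, hdomd⟩, hroot_of_unity⟩
  have h0 : IsUnit (f.coeff 0) := Int.isUnit_iff.mpr hc0
  obtain ⟨e, hroots⟩ : ∃ e, f.aroots ℂ = e ::ₘ {a, b, c, d} := by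
    refine Multiset.exists_eq_cons_of_le_of_card_eq_add_one ?_ (by simp [hf.card_aroots, hdeg])
    rw [Multiset.le_iff_subset (by simp [*])]
    simp only [Multiset.insert_eq_cons, Multiset.cons_subset, Multiset.singleton_subset,
      hf.mem_aroots_iff_isRoot]
    exact ⟨ha, hb, hc, hd⟩
  have hs : ∀ w ∈ ({a, b, c, d} : Multiset ℂ), ‖w‖ = ‖a‖ := by
    simp only [Multiset.insert_eq_cons, Multiset.mem_cons, Multiset.mem_singleton]
    rintro w (rfl | rfl | rfl | rfl)
    exacts [rfl, le_antisymm (hdoma _ hb) (hdomb _ ha), le_antisymm (hdoma _ hc) (hdomc _ ha),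
      le_antisymm (hdoma _ hd) (hdomd _ ha)]
  have he : ‖e‖ ≤ ‖a‖ :=
    hdoma e (hf.mem_aroots_iff_isRoot.mp (hroots ▸ Multiset.mem_cons_self e _))
  rcases (hf.one_le_of_norm_le h0 hroots hs (by simp) he).eq_or_lt with hr | hr
  · have hall : ∀ w ∈ f.aroots ℂ, ‖w‖ = 1 := fun w hw => by
      rcases hf.norm_eq_or_of_mem_aroots h0 hroots hs hw with h | h <;> simp [h, ← hr]
    obtain ⟨n, hn, hab_pow⟩ := exists_div_pow_eq_one_of_forall_norm_eq_one hf hall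
      (hf.mem_aroots_iff_isRoot.mpr ha) (hf.mem_aroots_iff_isRoot.mpr hb)
    exact hroot_of_unity a b ha hb hab n hn hab_pow
  · simpa using hf.card_le_two_of_one_lt h0 hroots hs hr
end

section
/- Let f ∈ ℤ[x] be a monic polynomial of degree 5 with constant coefficient ±1 having exactly four distinct roots of maximal modulus R > 1 (forming two complex-conjugate pairs α, ᾱ, β, β̄) and one further root ρ with |ρ| < R. Then f is irreducible over ℚ. -/
/-!
Since the constant coefficient is ±1, the moduli of the complex roots of `f`, and of any monic
integer factor of `f`, multiply to 1. In a factorisation `f = g * h` the root multiset of `f`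
is split between `g` and `h`, and the factor that does not receive `ρ` only has roots of modulus
`R > 1`; its root moduli can multiply to 1 only if it has no roots, i.e. it is constant.
Gauss's lemma carries irreducibility from `ℤ[X]` to `ℚ[X]`.
-/

open Polynomial

theorem Multiset.eq_zero_of_one_lt_of_prod_eq_one {R : Type*} [CommMonoidWithZero R]
    [PartialOrder R] [ZeroLEOneClass R] [PosMulMono R] {s : Multiset R} (hs : ∀ x ∈ s, 1 < x)
    (hprod : s.prod = 1) : s = 0 := by
  by_contra hne
  obtain ⟨a, ha⟩ := Multiset.exists_mem_of_ne_zero hne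
  obtain ⟨t, rfl⟩ := Multiset.exists_cons_of_mem ha
  have hta : 1 ≤ t.prod := Multiset.one_le_prod fun x hx => (hs x (Multiset.mem_cons_of_mem hx)).le
  have ha1 : 1 < a := hs a (Multiset.mem_cons_self a t)
  have hle : a ≤ (a ::ₘ t).prod := by
    simpa [Multiset.prod_cons] using mul_le_mul_of_nonneg_left hta (zero_le_one.trans ha1.le)
  exact (ha1.trans_le hle).ne' hprod

theorem Multiset.eq_zero_or_eq_of_le_cons_of_prod_map_eq_one {ι R : Type*} [CommMonoidWithZero R]
    [PartialOrder R] [ZeroLEOneClass R] [PosMulMono R] (v : ι → R) {a : ι} {N T : Multiset ι}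
    (hN : ∀ x ∈ N, 1 < v x) (hprod : ((a ::ₘ N).map v).prod = 1) (hT : T ≤ a ::ₘ N)
    (hTprod : (T.map v).prod = 1) : T = 0 ∨ T = a ::ₘ N := by
  classical
  have trivial_of_le : ∀ S ≤ N, (S.map v).prod = 1 → S = 0 := fun S hS hSprod =>
    Multiset.map_eq_zero.mp <| Multiset.eq_zero_of_one_lt_of_prod_eq_one
      (by simpa using fun x hx => hN x (Multiset.mem_of_le hS hx)) hSprod
  by_cases ha : a ∈ T
  · right
    obtain ⟨T', rfl⟩ := Multiset.exists_cons_of_mem ha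
    rw [Multiset.cons_le_cons_iff] at hT
    have hcompl : ((N - T').map v).prod = 1 :=
      calc ((N - T').map v).prod = ((N - T').map v).prod * ((a ::ₘ T').map v).prod := by
            rw [hTprod, mul_one]
        _ = ((a ::ₘ N).map v).prod := by
            rw [← Multiset.prod_add, ← Multiset.map_add, Multiset.add_cons,
              Multiset.sub_add_cancel hT]
        _ = 1 := hprod
    have hNT : N - T' = 0 := trivial_of_le _ (Multiset.sub_le_self N T') hcompl
    rw [le_antisymm hT (tsub_eq_zero_iff_le.mp hNT)]
  · exact Or.inl (trivial_of_le T ((Multiset.le_cons_of_notMem ha).mp hT) hTprod)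

theorem Polynomial.Splits.norm_coeff_zero_eq_prod_norm_roots {K : Type*} [NormedField K]
    {p : K[X]} (hp : p.Splits) (hm : p.Monic) : ‖p.coeff 0‖ = (p.roots.map (‖·‖)).prod := by
  rw [hp.coeff_zero_eq_prod_roots_of_monic hm, norm_mul, norm_pow, norm_neg, norm_one, one_pow,
    one_mul]
  exact map_multiset_prod (normHom : K →*₀ ℝ) _

theorem Polynomial.prod_norm_roots_map_eq_one {g : ℤ[X]} (hg : g.Monic) (h0 : IsUnit (g.coeff 0)) :
    ((g.map (Int.castRingHom ℂ)).roots.map (‖·‖)).prod = 1 := by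
  rw [← (IsAlgClosed.splits _).norm_coeff_zero_eq_prod_norm_roots (hg.map _), coeff_map,
    eq_intCast]
  rcases Int.isUnit_iff.mp h0 with h | h <;> simp [h]

theorem Polynomial.Monic.irreducible_map_rat_of_prod_norm_roots {f : ℤ[X]} (hf : f.Monic)
    (hdeg : 0 < f.natDegree) (h0 : IsUnit (f.coeff 0))
    (hroots : ∀ T ≤ (f.map (Int.castRingHom ℂ)).roots, (T.map (‖·‖)).prod = 1 →
      T = 0 ∨ T = (f.map (Int.castRingHom ℂ)).roots) :
    Irreducible (f.map (Int.castRingHom ℚ)) := by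
  rw [← algebraMap_int_eq, ← hf.irreducible_iff_irreducible_map_fraction_map,
    hf.irreducible_iff_natDegree]
  refine ⟨fun h => by simp [h] at hdeg, fun a b ha hb hab => ?_⟩
  have hdvd : a ∣ f := Dvd.intro b hab
  have ha0 : IsUnit (a.coeff 0) := by
    simpa only [constantCoeff_apply] using
      isUnit_of_dvd_unit (_root_.map_dvd constantCoeff hdvd) h0
  have hsplit := IsAlgClosed.splits (a.map (Int.castRingHom ℂ))
  rcases hroots _ (roots.le_of_dvd (hf.map _).ne_zero (Polynomial.map_dvd _ hdvd))
    (prod_norm_roots_map_eq_one ha ha0) with h | h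
  · left
    rw [← ha.natDegree_map (Int.castRingHom ℂ), hsplit.natDegree_eq_card_roots, h,
      Multiset.card_zero]
  · right
    have hdeg_eq : a.natDegree = f.natDegree := by
      rw [← ha.natDegree_map (Int.castRingHom ℂ), ← hf.natDegree_map (Int.castRingHom ℂ),
        hsplit.natDegree_eq_card_roots, h, (IsAlgClosed.splits _).natDegree_eq_card_roots]
    have hsum := ha.natDegree_mul hb
    rw [hab] at hsum
    omega

theorem quintic_irreducible_general (f : Polynomial ℤ) (hmonic : f.Monic) (hdeg : f.natDegree = 5)
    (hconst : f.coeff 0 = 1 ∨ f.coeff 0 = -1)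
    (R : ℝ) (hR : 1 < R) (α β ρ : ℂ)
    (hfac : f.map (Int.castRingHom ℂ) =
      (X - C α) * (X - C (starRingEnd ℂ α)) * (X - C β) * (X - C (starRingEnd ℂ β)) * (X - C ρ))
    (hα : ‖α‖ = R) (hβ : ‖β‖ = R) :
    Irreducible (f.map (Int.castRingHom ℚ)) := by
  have hunit : IsUnit (f.coeff 0) := Int.isUnit_iff.mpr hconst
  have hroots : (f.map (Int.castRingHom ℂ)).roots =
      ρ ::ₘ {α, starRingEnd ℂ α, β, starRingEnd ℂ β} := by
    rw [hfac, ← roots_multiset_prod_X_sub_C (ρ ::ₘ {α, starRingEnd ℂ α, β, starRingEnd ℂ β})]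
    congr 1
    simp only [Multiset.insert_eq_cons, Multiset.map_cons, Multiset.map_singleton,
      Multiset.prod_cons, Multiset.prod_singleton]
    ring
  have hprod := prod_norm_roots_map_eq_one hmonic hunit
  refine hmonic.irreducible_map_rat_of_prod_norm_roots (by omega) hunit fun T hT hTprod => ?_
  rw [hroots] at hprod hT ⊢
  refine Multiset.eq_zero_or_eq_of_le_cons_of_prod_map_eq_one _ ?_ hprod hT hTprod
  simp [hα, hβ, hR]

/-- A monic quintic in ℤ[x] with constant coefficient ±1, four simple dominant roots
(two complex-conjugate pairs) on a circle of radius R > 1 and a fifth root of smaller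
modulus is irreducible over ℚ. -/
theorem quintic_irreducible (f : Polynomial ℤ) (hmonic : f.Monic) (hdeg : f.natDegree = 5)
    (hconst : f.coeff 0 = 1 ∨ f.coeff 0 = -1)
    (R : ℝ) (hR : 1 < R) (α β ρ : ℂ)
    (hfac : f.map (Int.castRingHom ℂ) =
      (X - C α) * (X - C (starRingEnd ℂ α)) * (X - C β) * (X - C (starRingEnd ℂ β)) * (X - C ρ))
    (hdist : α ≠ starRingEnd ℂ α ∧ α ≠ β ∧ α ≠ starRingEnd ℂ β ∧
      starRingEnd ℂ α ≠ β ∧ starRingEnd ℂ α ≠ starRingEnd ℂ β ∧ β ≠ starRingEnd ℂ β)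
    (hα : ‖α‖ = R) (hβ : ‖β‖ = R) (hρ : ‖ρ‖ < R) :
    Irreducible (f.map (Int.castRingHom ℚ)) :=
  quintic_irreducible_general f hmonic hdeg hconst R hR α β ρ hfac hα hβ
end

section
/- Let f ∈ ℚ[x] be an irreducible monic quintic with four distinct roots α, ᾱ, β, β̄ all of modulus R and a fifth root ρ with |ρ| < R. Suppose σ is a field automorphism of the splitting field of f with σ(α) = ρ. Then σ cannot map both β and β̄ into the set {α, ᾱ, β, β̄} of dominant roots. -/
/-!
Since `αᾱ = ββ̄ = R²`, applying `σ` gives `ρ · σ(ᾱ) = σ(β) · σ(β̄)`. The five distinct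
roots `α, ᾱ, β, β̄, ρ` are all the roots of the quintic, so every root, in particular `σ(ᾱ)`, has
modulus at most `R`, and the left side has modulus `< R²`. If `σ(β)` and `σ(β̄)` were both
dominant, the right side would have modulus exactly `R²`.
-/

open Polynomial ComplexConjugate

theorem Polynomial.eq_rootSet_of_subset_of_natDegree_le {A B : Type*} [CommRing A] [CommRing B]
    [IsDomain B] [Algebra A B] {p : A[X]} {S : Set B} (hS : S ⊆ p.rootSet B)
    (hcard : p.natDegree ≤ S.ncard) : S = p.rootSet B :=
  Set.eq_of_subset_of_ncard_le hS ((ncard_rootSet_le p B).trans hcard) (p.rootSet_finite B)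

theorem IntermediateField.coe_mem_rootSet_iff {K L : Type*} [Field K] [Field L] [Algebra K L]
    {E : IntermediateField K L} {p : K[X]} {x : E} : (x : L) ∈ p.rootSet L ↔ x ∈ p.rootSet E := by
  simp only [mem_rootSet, IntermediateField.aeval_coe, ZeroMemClass.coe_eq_zero]

theorem IntermediateField.algEquiv_coe_mem_rootSet {K L : Type*} [Field K] [Field L] [Algebra K L]
    {E : IntermediateField K L} (σ : E ≃ₐ[K] E) {p : K[X]} {x : E} (hx : (x : L) ∈ p.rootSet L) :
    (σ x : L) ∈ p.rootSet L :=
  coe_mem_rootSet_iff.2 (rootSet_mapsTo σ.toAlgHom (coe_mem_rootSet_iff.1 hx))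

theorem mul_ne_mul_of_norm_lt {𝕜 : Type*} [NormedDivisionRing 𝕜] {R : ℝ} {a b c d : 𝕜}
    (ha : ‖a‖ < R) (hb : ‖b‖ ≤ R) (hc : ‖c‖ = R) (hd : ‖d‖ = R) : a * b ≠ c * d := by
  intro h
  have hnorm := congrArg norm h
  rw [norm_mul, norm_mul, hc, hd] at hnorm
  nlinarith [norm_nonneg a, norm_nonneg b]

theorem sigma_not_both_dominant_general (f : Polynomial ℚ)
    (hdeg : f.natDegree = 5) (R : ℝ) (α β ρ : ℂ)
    (hαroot : α ∈ f.rootSet ℂ) (hαcroot : starRingEnd ℂ α ∈ f.rootSet ℂ)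
    (hβroot : β ∈ f.rootSet ℂ) (hβcroot : starRingEnd ℂ β ∈ f.rootSet ℂ)
    (hρroot : ρ ∈ f.rootSet ℂ)
    (hdist : α ≠ starRingEnd ℂ α ∧ α ≠ β ∧ α ≠ starRingEnd ℂ β ∧
      starRingEnd ℂ α ≠ β ∧ starRingEnd ℂ α ≠ starRingEnd ℂ β ∧ β ≠ starRingEnd ℂ β)
    (hα : ‖α‖ = R) (hβ : ‖β‖ = R) (hρ : ‖ρ‖ < R)
    (hαK : α ∈ IntermediateField.adjoin ℚ (f.rootSet ℂ))
    (hβK : β ∈ IntermediateField.adjoin ℚ (f.rootSet ℂ))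
    (hβcK : starRingEnd ℂ β ∈ IntermediateField.adjoin ℚ (f.rootSet ℂ))
    (σ : (IntermediateField.adjoin ℚ (f.rootSet ℂ)) ≃ₐ[ℚ]
      (IntermediateField.adjoin ℚ (f.rootSet ℂ)))
    (hσα : (σ ⟨α, hαK⟩ : ℂ) = ρ) :
    ¬ ((σ ⟨β, hβK⟩ : ℂ) ∈ ({α, starRingEnd ℂ α, β, starRingEnd ℂ β} : Set ℂ) ∧
       (σ ⟨starRingEnd ℂ β, hβcK⟩ : ℂ) ∈ ({α, starRingEnd ℂ α, β, starRingEnd ℂ β} : Set ℂ)) := by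
  rintro ⟨hσβ, hσβc⟩
  obtain ⟨hααc, hαβ, hαβc, hαcβ, hαcβc, hββc⟩ := hdist
  set D : Set ℂ := {α, conj α, β, conj β}
  have hD : ∀ x ∈ D, ‖x‖ = R := by rintro x (rfl | rfl | rfl | rfl) <;> simp [hα, hβ]
  have hρD : ρ ∉ D := fun h ↦ hρ.ne (hD ρ h)
  have hroots : insert ρ D = f.rootSet ℂ := by
    refine eq_rootSet_of_subset_of_natDegree_le
      (by rintro x (rfl | rfl | rfl | rfl | rfl) <;> assumption) ?_
    rw [Set.ncard_insert_of_notMem hρD, Set.ncard_eq_four.2 ⟨_, _, _, _, hααc, hαβ, hαβc,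
      hαcβ, hαcβc, hββc, rfl⟩, hdeg]
  have hαcK := IntermediateField.subset_adjoin ℚ _ hαcroot
  have hσαc : ‖(σ ⟨conj α, hαcK⟩ : ℂ)‖ ≤ R := by
    rcases hroots.symm.subset
      (IntermediateField.algEquiv_coe_mem_rootSet σ (x := ⟨_, hαcK⟩) hαcroot) with h | h
    · exact h ▸ hρ.le
    · exact (hD _ h).le
  have hnorms : (⟨α, hαK⟩ * ⟨conj α, hαcK⟩ : IntermediateField.adjoin ℚ (f.rootSet ℂ)) =
      ⟨β, hβK⟩ * ⟨conj β, hβcK⟩ :=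
    Subtype.ext (by simp [Complex.mul_conj', hα, hβ])
  have hσnorms := congrArg (fun x ↦ ((σ x : _) : ℂ)) hnorms
  simp only [map_mul, IntermediateField.coe_mul, hσα] at hσnorms
  exact mul_ne_mul_of_norm_lt hρ hσαc (hD _ hσβ) (hD _ hσβc) hσnorms

/-- For an irreducible monic quintic over ℚ with four dominant roots α, ᾱ, β, β̄ of modulus R
and a fifth root ρ with |ρ| < R, an automorphism σ of the splitting field (inside ℂ) sending
α to ρ cannot map both β and β̄ into the set of dominant roots. -/
theorem sigma_not_both_dominant (f : Polynomial ℚ) (hirr : Irreducible f) (hmonic : f.Monic)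
    (hdeg : f.natDegree = 5) (R : ℝ) (α β ρ : ℂ)
    (hαroot : α ∈ f.rootSet ℂ) (hαcroot : starRingEnd ℂ α ∈ f.rootSet ℂ)
    (hβroot : β ∈ f.rootSet ℂ) (hβcroot : starRingEnd ℂ β ∈ f.rootSet ℂ)
    (hρroot : ρ ∈ f.rootSet ℂ)
    (hdist : α ≠ starRingEnd ℂ α ∧ α ≠ β ∧ α ≠ starRingEnd ℂ β ∧
      starRingEnd ℂ α ≠ β ∧ starRingEnd ℂ α ≠ starRingEnd ℂ β ∧ β ≠ starRingEnd ℂ β)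
    (hα : ‖α‖ = R) (hβ : ‖β‖ = R) (hρ : ‖ρ‖ < R)
    (hαK : α ∈ IntermediateField.adjoin ℚ (f.rootSet ℂ))
    (hβK : β ∈ IntermediateField.adjoin ℚ (f.rootSet ℂ))
    (hβcK : starRingEnd ℂ β ∈ IntermediateField.adjoin ℚ (f.rootSet ℂ))
    (σ : (IntermediateField.adjoin ℚ (f.rootSet ℂ)) ≃ₐ[ℚ]
      (IntermediateField.adjoin ℚ (f.rootSet ℂ)))
    (hσα : (σ ⟨α, hαK⟩ : ℂ) = ρ) :
    ¬ ((σ ⟨β, hβK⟩ : ℂ) ∈ ({α, starRingEnd ℂ α, β, starRingEnd ℂ β} : Set ℂ) ∧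
       (σ ⟨starRingEnd ℂ β, hβcK⟩ : ℂ) ∈ ({α, starRingEnd ℂ α, β, starRingEnd ℂ β} : Set ℂ)) :=
  sigma_not_both_dominant_general f hdeg R α β ρ hαroot hαcroot hβroot hβcroot hρroot hdist hα hβ hρ
    hαK hβK hβcK σ hσα
end

section
/- Let α be an algebraic number with Galois conjugates β and γ (roots of the minimal polynomial of α) satisfying α² = βγ with β ≠ α. Then α/β is a root of unity. -/
/-!
For every complex embedding `φ` of the Galois closure, `log ‖φ x‖` is an additive valuation, and
so is the multiplicity of each prime ideal in `(x)` for algebraic integers `x`. The automorphisms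
`σ`, `τ` with `σ α = β`, `τ α = γ` permute embeddings and primes, and `α² = βγ` says that every
valuation of `α` is the average of the permuted ones. A permutation preserves the sum of squares
of a finitely supported function, so by strict convexity of `x ↦ x²` all these valuations of `α`
and `β` agree: `α / β` is a unit whose conjugates all have absolute value one, hence a root of
unity by Kronecker.
-/

open Polynomial NumberField UniqueFactorizationMonoid Pointwise

theorem Function.HasFiniteSupport.apply_perm_eq_of_two_mul_eq_add {ι R : Type*} [CommRing R]
    [LinearOrder R] [IsStrictOrderedRing R] {f : ι → R} (hf : f.HasFiniteSupport)
    {e₁ e₂ : Equiv.Perm ι} (h : ∀ i, 2 * f i = f (e₁ i) + f (e₂ i)) (i : ι) :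
    f (e₁ i) = f i := by
  have hdev : ∑ᶠ j, ((f (e₁ j) - f j) ^ 2 + (f (e₂ j) - f j) ^ 2) = 0 := by
    calc ∑ᶠ j, ((f (e₁ j) - f j) ^ 2 + (f (e₂ j) - f j) ^ 2)
        = ∑ᶠ j, (f (e₁ j) ^ 2 + f (e₂ j) ^ 2 - 2 * f j ^ 2) :=
          finsum_congr fun j => by linear_combination (2 * f j) * h j
      _ = ∑ᶠ j, f (e₁ j) ^ 2 + ∑ᶠ j, f (e₂ j) ^ 2 - 2 * ∑ᶠ j, f j ^ 2 := by
          rw [mul_finsum' _ _ (by fun_prop (disch := simp)),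
            ← finsum_add_distrib (by fun_prop (disch := simp [Equiv.injective]))
              (by fun_prop (disch := simp [Equiv.injective])),
            ← finsum_sub_distrib (by fun_prop (disch := simp [Equiv.injective]))
              (by fun_prop (disch := simp))]
      _ = 0 := by
          rw [finsum_comp_equiv e₁ (f := (f · ^ 2)), finsum_comp_equiv e₂ (f := (f · ^ 2))]
          ring
  by_contra hne
  have hpos : 0 < (f (e₁ i) - f i) ^ 2 + (f (e₂ i) - f i) ^ 2 := by
    have := sub_ne_zero.mpr hne
    positivity
  exact (finsum_pos (fun j => by positivity) ⟨i, hpos⟩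
    (by fun_prop (disch := simp [Equiv.injective]))).ne' hdev

theorem Multiset.map_perm_eq_self_of_two_nsmul_eq {ι : Type*} {m : Multiset ι}
    {e₁ e₂ : Equiv.Perm ι} (h : 2 • m = m.map e₁ + m.map e₂) : m.map e₁ = m := by
  classical
  have count_map (e : Equiv.Perm ι) (i : ι) : (m.map e).count i = m.count (e.symm i) := by
    simpa using m.count_map_eq_count' e e.injective (e.symm i)
  have hfin : Function.HasFiniteSupport fun i => (m.count i : ℤ) :=
    m.toFinset.finite_toSet.subset fun i hi => by simpa using hi
  ext i
  rw [count_map]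
  exact_mod_cast hfin.apply_perm_eq_of_two_mul_eq_add (e₁ := e₁.symm) (e₂ := e₂.symm)
    (fun j => by exact_mod_cast by simpa [count_map] using congrArg (count j) h) i

namespace UniqueFactorizationMonoid

variable {α : Type*} [CommMonoidWithZero α] [NormalizationMonoid α] [UniqueFactorizationMonoid α]
  [Subsingleton αˣ]

theorem normalizedFactors_mulEquiv {β : Type*} [CommMonoidWithZero β] [NormalizationMonoid β]
    [UniqueFactorizationMonoid β] [Subsingleton βˣ] (f : α ≃* β) (a : α) :
    normalizedFactors (f a) = (normalizedFactors a).map f := by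
  rcases eq_or_ne a 0 with rfl | ha
  · simp
  conv_lhs => rw [← associated_iff_eq.mp (prod_normalizedFactors ha), map_multiset_prod]
  exact normalizedFactors_prod_of_prime fun p hp => by
    obtain ⟨q, hq, rfl⟩ := Multiset.mem_map.mp hp
    exact (MulEquiv.prime_iff f).mpr (prime_of_normalized_factor q hq)

theorem smul_eq_self_of_sq_eq_smul_mul_smul {G : Type*} [Group G] [MulDistribMulAction G α]
    {a : α} (ha : a ≠ 0) {g h : G} (hsq : a ^ 2 = (g • a) * (h • a)) : g • a = a := by
  have hmap (k : G) : normalizedFactors (k • a) = (normalizedFactors a).map (MulAction.toPerm k) :=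
    normalizedFactors_mulEquiv (MulDistribMulAction.toMulEquiv α k) a
  have hne (k : G) : k • a ≠ 0 :=
    EmbeddingLike.map_ne_zero_iff (f := MulDistribMulAction.toMulEquiv α k) |>.mpr ha
  have hfac := congrArg normalizedFactors hsq
  rw [normalizedFactors_pow, normalizedFactors_mul (hne g) (hne h), hmap, hmap] at hfac
  calc g • a = (normalizedFactors (g • a)).prod :=
        (associated_iff_eq.mp (prod_normalizedFactors (hne g))).symm
    _ = (normalizedFactors a).prod := by rw [hmap, Multiset.map_perm_eq_self_of_two_nsmul_eq hfac]
    _ = a := associated_iff_eq.mp (prod_normalizedFactors ha)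

end UniqueFactorizationMonoid

theorem associated_smul_of_sq_eq_smul_mul_smul {G R : Type*} [Group G] [CommRing R]
    [IsDedekindDomain R] [MulSemiringAction G R] {x : R} (hx : x ≠ 0) {g h : G}
    (hsq : x ^ 2 = (g • x) * (h • x)) : Associated (g • x) x := by
  have hspan : Ideal.span {x} ^ 2 = (g • Ideal.span {x}) * (h • Ideal.span {x}) := by
    simp [Ideal.smul_closure, Ideal.span_singleton_pow, Ideal.span_singleton_mul_span_singleton,
      hsq]
  rw [← Ideal.span_singleton_eq_span_singleton]
  simpa [Ideal.smul_closure] using smul_eq_self_of_sq_eq_smul_mul_smul (by simpa) hspan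

theorem norm_apply_ringEquiv_eq_of_sq_eq_mul {K A : Type*} [Field K] [NormedField A]
    [Finite (K →+* A)] {a : K} (ha : a ≠ 0) {σ τ : K ≃+* K} (hsq : a ^ 2 = σ a * τ a)
    (φ : K →+* A) : ‖φ (σ a)‖ = ‖φ a‖ := by
  let precomp (ρ : K ≃+* K) : Equiv.Perm (K →+* A) :=
    ⟨(·.comp ρ), (·.comp ρ.symm), fun ψ => by ext; simp, fun ψ => by ext; simp⟩
  have hpos (ψ : K →+* A) {x : K} (hx : x ≠ 0) : 0 < ‖ψ x‖ :=
    norm_pos_iff.mpr ((map_ne_zero ψ).mpr hx)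
  have hlog (ψ : K →+* A) :
      2 * Real.log ‖ψ a‖ = Real.log ‖ψ (σ a)‖ + Real.log ‖ψ (τ a)‖ := by
    rw [← Real.log_mul (hpos ψ ((map_ne_zero σ).mpr ha)).ne' (hpos ψ ((map_ne_zero τ).mpr ha)).ne',
      ← norm_mul, ← map_mul, ← hsq, map_pow, norm_pow, Real.log_pow, Nat.cast_ofNat]
  exact Real.log_injOn_pos (hpos φ ((map_ne_zero σ).mpr ha)) (hpos φ ha)
    (Function.HasFiniteSupport.apply_perm_eq_of_two_mul_eq_add (Set.toFinite _)
      (e₁ := precomp σ) (e₂ := precomp τ) hlog φ)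

namespace NumberField

variable {K : Type*} [Field K] [NumberField K]

theorem isIntegral_div_algEquiv_of_sq_eq_mul {a : K} (ha : a ≠ 0) {σ τ : K ≃ₐ[ℚ] K}
    (hsq : a ^ 2 = σ a * τ a) : IsIntegral ℤ (a / σ a) := by
  -- the relation is homogeneous, so `a` may be scaled by an integer to become integral
  obtain ⟨d, hd, hint⟩ := ((IsFractionRing.isAlgebraic_iff ℤ ℚ K).mpr
    (Algebra.IsAlgebraic.isAlgebraic a)).exists_integral_multiple
  set A : 𝓞 K := ⟨d • a, hint⟩
  have hd' : (d : K) ≠ 0 := Int.cast_ne_zero.mpr hd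
  have hA_coe : (A : K) = d * a := zsmul_eq_mul _ _
  have hsmul_coe (ρ : K ≃ₐ[ℚ] K) : ((ρ • A : 𝓞 K) : K) = d * ρ a := by
    change ρ (d • a) = _
    rw [map_zsmul, zsmul_eq_mul]
  have hA : A ≠ 0 := fun h => mul_ne_zero hd' ha (by rw [← hA_coe, h]; rfl)
  have hsqA : A ^ 2 = (σ • A) * (τ • A) := by
    apply RingOfIntegers.coe_injective
    push_cast [hsmul_coe, hA_coe]
    linear_combination (d : K) ^ 2 * hsq
  obtain ⟨u, hu⟩ := associated_smul_of_sq_eq_smul_mul_smul hA hsqA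
  have hunit : a / σ a = ((u : 𝓞 K) : K) := by
    have := congrArg ((↑) : 𝓞 K → K) hu
    push_cast [hsmul_coe, hA_coe] at this
    rw [div_eq_iff ((map_ne_zero σ).mpr ha)]
    exact mul_left_cancel₀ hd' (by linear_combination -this)
  exact hunit ▸ RingOfIntegers.isIntegral_coe _

theorem exists_pow_div_eq_one_of_isConjRoot_of_sq_eq_mul [Normal ℚ K] {a b c : K}
    (ha : a ≠ 0) (hb : IsConjRoot ℚ a b) (hc : IsConjRoot ℚ a c) (hsq : a ^ 2 = b * c) :
    ∃ n, 0 < n ∧ (a / b) ^ n = 1 := by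
  obtain ⟨σ, rfl⟩ := hb.symm.exists_algEquiv
  obtain ⟨τ, rfl⟩ := hc.symm.exists_algEquiv
  have hnorm (φ : K →+* ℂ) : ‖φ (a / σ a)‖ = 1 := by
    have hσ : ‖φ (σ a)‖ = ‖φ a‖ :=
      norm_apply_ringEquiv_eq_of_sq_eq_mul (σ := (σ : K ≃+* K)) (τ := (τ : K ≃+* K)) ha hsq φ
    rw [map_div₀, norm_div, hσ, div_self (norm_ne_zero_iff.mpr ((map_ne_zero φ).mpr ha))]
  obtain ⟨n, hn, hpow⟩ := Embeddings.pow_eq_one_of_norm_eq_one K ℂ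
    (isIntegral_div_algEquiv_of_sq_eq_mul ha hsq) hnorm
  exact ⟨n, hn, hpow⟩

end NumberField

theorem Complex.exists_pow_div_eq_one_of_isConjRoot_of_sq_eq_mul {α β γ : ℂ}
    (hint : IsIntegral ℚ α) (hα : α ≠ 0) (hβ : IsConjRoot ℚ α β) (hγ : IsConjRoot ℚ α γ)
    (hrel : α ^ 2 = β * γ) : ∃ n, 0 < n ∧ (α / β) ^ n = 1 := by
  let K := IntermediateField.adjoin ℚ ((minpoly ℚ α).rootSet ℂ)
  have : (minpoly ℚ α).IsSplittingField ℚ K :=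
    IntermediateField.adjoin_rootSet_isSplittingField (IsAlgClosed.splits _)
  have : FiniteDimensional ℚ K := IsSplittingField.finiteDimensional K (minpoly ℚ α)
  have : Normal ℚ K := Normal.of_isSplittingField (minpoly ℚ α)
  have : NumberField K := ⟨⟩
  have mem {z : ℂ} (hz : IsConjRoot ℚ α z) : z ∈ K :=
    IntermediateField.subset_adjoin _ _ ((isConjRoot_iff_mem_minpoly_rootSet hint).mp hz)
  let a : K := ⟨α, mem IsConjRoot.refl⟩
  let b : K := ⟨β, mem hβ⟩
  let c : K := ⟨γ, mem hγ⟩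
  obtain ⟨n, hn, hpow⟩ := NumberField.exists_pow_div_eq_one_of_isConjRoot_of_sq_eq_mul
    (a := a) (b := b) (c := c) (fun h => hα (congrArg Subtype.val h))
    ((isConjRoot_algHom_iff K.val).mp hβ)
    ((isConjRoot_algHom_iff K.val).mp hγ) (Subtype.ext hrel)
  exact ⟨n, hn, by simpa [a, b] using congrArg K.val hpow⟩

/-- If an algebraic number α has Galois conjugates β and γ with α² = βγ and β ≠ α,
then α/β is a root of unity. -/
theorem conjugate_square_ratio (α β γ : ℂ) (halg : IsAlgebraic ℚ α)
    (hβ : ((minpoly ℚ α).map (Rat.castHom ℂ)).IsRoot β)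
    (hγ : ((minpoly ℚ α).map (Rat.castHom ℂ)).IsRoot γ)
    (hrel : α ^ 2 = β * γ) (hne : β ≠ α) :
    ∃ n : ℕ, 0 < n ∧ (α / β) ^ n = 1 := by
  have hint := halg.isIntegral
  have conj (z : ℂ) (hz : ((minpoly ℚ α).map (Rat.castHom ℂ)).IsRoot z) : IsConjRoot ℚ α z :=
    isConjRoot_of_aeval_eq_zero hint (by rw [aeval_def, ← eval_map]; exact hz)
  have hα : α ≠ 0 := by
    rintro rfl
    exact hne (conj β hβ).eq_zero
  exact Complex.exists_pow_div_eq_one_of_isConjRoot_of_sq_eq_mul hint hα (conj β hβ) (conj γ hγ)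
    hrel
end

section
/- Let f ∈ ℤ[x] be the characteristic polynomial of a real matrix with roots r e^{±iθ}, r e^{±iψ} (r > 1) and suppose the four dominant roots α = re^{iθ}, ᾱ, β = re^{iψ}, β̄ are distinct with no ratio of distinct roots a root of unity. Then the sequence a_n = (rⁿ + r^{−n})(2cos(nθ) + 2cos(nψ)) takes infinitely many distinct values as n ranges over ℕ. -/
open Polynomial Complex Finset

/-!
If the sequence took only finitely many values it would be bounded, so
`sₙ = 2 cos nθ + 2 cos nψ = O(r⁻ⁿ)` and `∑ sₙ²` would converge. But `sₙ²` is `4` plus multiples of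
`cos (n·2θ)`, `cos (n·2ψ)`, `cos (n(θ + ψ))`, `cos (n(θ - ψ))`, whose partial sums stay bounded
because `e^{2iθ}`, `e^{2iψ}`, `e^{i(θ ± ψ)}` are ratios of distinct dominant roots, hence `≠ 1`.
So `∑_{n<N} sₙ² ≥ 4N - O(1)`.
-/

lemma norm_geom_sum_le_of_norm_eq_one {z : ℂ} (hz : ‖z‖ = 1) (h1 : z ≠ 1) (N : ℕ) :
    ‖∑ n ∈ range N, z ^ n‖ ≤ 2 / ‖z - 1‖ := by
  rw [geom_sum_eq h1 N, norm_div]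
  gcongr
  calc ‖z ^ N - 1‖ ≤ ‖z ^ N‖ + ‖(1 : ℂ)‖ := norm_sub_le _ _
    _ = 2 := by rw [norm_pow, hz]; norm_num

lemma abs_sum_range_cos_nat_mul_le {φ : ℝ} (h : exp (φ * I) ≠ 1) (N : ℕ) :
    |∑ n ∈ range N, Real.cos (n * φ)| ≤ 2 / ‖exp (φ * I) - 1‖ := by
  have hcos : ∀ n : ℕ, Real.cos (n * φ) = (exp (φ * I) ^ n).re := by
    intro n
    rw [← Complex.exp_nat_mul, ← exp_ofReal_mul_I_re]
    push_cast
    ring_nf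
  simp_rw [hcos, ← re_sum]
  exact (abs_re_le_norm _).trans (norm_geom_sum_le_of_norm_eq_one (norm_exp_ofReal_mul_I φ) h N)

lemma two_cos_add_two_cos_sq (a b : ℝ) :
    (2 * Real.cos a + 2 * Real.cos b) ^ 2 = 4 + 2 * Real.cos (2 * a) + 2 * Real.cos (2 * b)
      + 4 * Real.cos (a + b) + 4 * Real.cos (a - b) := by
  rw [Real.cos_two_mul, Real.cos_two_mul, Real.cos_add, Real.cos_sub]
  ring

lemma exists_sub_le_sum_range_sq_two_cos_add_two_cos {θ ψ : ℝ}
    (h2θ : exp (↑(2 * θ) * I) ≠ 1) (h2ψ : exp (↑(2 * ψ) * I) ≠ 1)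
    (hadd : exp (↑(θ + ψ) * I) ≠ 1) (hsub : exp (↑(θ - ψ) * I) ≠ 1) :
    ∃ C, ∀ N : ℕ, 4 * (N : ℝ) - C ≤
      ∑ n ∈ range N, (2 * Real.cos (n * θ) + 2 * Real.cos (n * ψ)) ^ 2 := by
  refine ⟨2 * (2 / ‖exp (↑(2 * θ) * I) - 1‖) + 2 * (2 / ‖exp (↑(2 * ψ) * I) - 1‖)
    + 4 * (2 / ‖exp (↑(θ + ψ) * I) - 1‖) + 4 * (2 / ‖exp (↑(θ - ψ) * I) - 1‖), fun N => ?_⟩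
  have hterm : ∀ n : ℕ, (2 * Real.cos (n * θ) + 2 * Real.cos (n * ψ)) ^ 2
      = 4 + 2 * Real.cos (n * (2 * θ)) + 2 * Real.cos (n * (2 * ψ))
        + 4 * Real.cos (n * (θ + ψ)) + 4 * Real.cos (n * (θ - ψ)) := by
    intro n
    rw [two_cos_add_two_cos_sq]
    ring_nf
  have hexpand : ∑ n ∈ range N, (2 * Real.cos (n * θ) + 2 * Real.cos (n * ψ)) ^ 2
      = 4 * N + 2 * ∑ n ∈ range N, Real.cos (n * (2 * θ))
        + 2 * ∑ n ∈ range N, Real.cos (n * (2 * ψ))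
        + 4 * ∑ n ∈ range N, Real.cos (n * (θ + ψ))
        + 4 * ∑ n ∈ range N, Real.cos (n * (θ - ψ)) := by
    simp only [hterm, sum_add_distrib, ← mul_sum, sum_const, card_range, nsmul_eq_mul]
    ring
  have b1 := abs_le.mp (abs_sum_range_cos_nat_mul_le h2θ N)
  have b2 := abs_le.mp (abs_sum_range_cos_nat_mul_le h2ψ N)
  have b3 := abs_le.mp (abs_sum_range_cos_nat_mul_le hadd N)
  have b4 := abs_le.mp (abs_sum_range_cos_nat_mul_le hsub N)
  linarith [b1.1, b2.1, b3.1, b4.1]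

lemma not_summable_sq_two_cos_add_two_cos {θ ψ : ℝ}
    (h2θ : exp (↑(2 * θ) * I) ≠ 1) (h2ψ : exp (↑(2 * ψ) * I) ≠ 1)
    (hadd : exp (↑(θ + ψ) * I) ≠ 1) (hsub : exp (↑(θ - ψ) * I) ≠ 1) :
    ¬ Summable fun n : ℕ => (2 * Real.cos (n * θ) + 2 * Real.cos (n * ψ)) ^ 2 := by
  intro hsum
  obtain ⟨C, hC⟩ := exists_sub_le_sum_range_sq_two_cos_add_two_cos h2θ h2ψ hadd hsub
  obtain ⟨N, hN⟩ := exists_nat_gt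
    ((∑' n : ℕ, (2 * Real.cos (n * θ) + 2 * Real.cos (n * ψ)) ^ 2 + C) / 4)
  linarith [hC N, hsum.sum_le_tsum (range N) fun n _ => sq_nonneg _]

lemma summable_sq_of_abs_pow_mul_le {r M : ℝ} (hr : 1 < r) {s : ℕ → ℝ}
    (h : ∀ n, |r ^ n * s n| ≤ M) : Summable fun n => s n ^ 2 := by
  have hq : (r ^ 2)⁻¹ < 1 := inv_lt_one_of_one_lt₀ (one_lt_pow₀ hr two_ne_zero)
  refine Summable.of_nonneg_of_le (fun n => sq_nonneg _) (fun n => ?_)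
    ((summable_geometric_of_lt_one (by positivity) hq).mul_left (M ^ 2))
  have hsq : (r ^ n * s n) ^ 2 ≤ M ^ 2 := sq_le_sq' (abs_le.mp (h n)).1 (abs_le.mp (h n)).2
  calc
    s n ^ 2 = (r ^ n * s n) ^ 2 * ((r ^ 2)⁻¹) ^ n := by
      rw [mul_pow, inv_pow, ← pow_mul, ← pow_mul, mul_comm 2 n]
      field_simp
    _ ≤ M ^ 2 * ((r ^ 2)⁻¹) ^ n := by gcongr

lemma exp_sub_ne_one_of_mul_exp_ne {c z w : ℂ} (h : c * exp z ≠ c * exp w) :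
    exp (z - w) ≠ 1 := by
  rw [exp_sub]
  exact div_ne_one_of_ne fun e => h (by rw [e])

theorem power_sum_infinitely_many_values_general (r θ ψ : ℝ) (hr : 1 < r)
    (hdist : ((r : ℂ) * Complex.exp (θ * I) ≠ (r : ℂ) * Complex.exp (-θ * I)) ∧
      ((r : ℂ) * Complex.exp (θ * I) ≠ (r : ℂ) * Complex.exp (ψ * I)) ∧
      ((r : ℂ) * Complex.exp (θ * I) ≠ (r : ℂ) * Complex.exp (-ψ * I)) ∧
      ((r : ℂ) * Complex.exp (-θ * I) ≠ (r : ℂ) * Complex.exp (ψ * I)) ∧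
      ((r : ℂ) * Complex.exp (-θ * I) ≠ (r : ℂ) * Complex.exp (-ψ * I)) ∧
      ((r : ℂ) * Complex.exp (ψ * I) ≠ (r : ℂ) * Complex.exp (-ψ * I))) :
    (Set.range fun n : ℕ =>
      (r ^ n + r⁻¹ ^ n) * (2 * Real.cos (n * θ) + 2 * Real.cos (n * ψ))).Infinite := by
  obtain ⟨hθ, hθψ, hθψ', -, -, hψ⟩ := hdist
  intro hfin
  obtain ⟨M, hM⟩ := (hfin.image abs).bddAbove
  have hdecay : ∀ n : ℕ, |r ^ n * (2 * Real.cos (n * θ) + 2 * Real.cos (n * ψ))| ≤ M := by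
    intro n
    have hpos : 0 < r⁻¹ ^ n := by positivity
    refine le_trans ?_ (hM ⟨_, Set.mem_range_self n, rfl⟩)
    rw [abs_mul, abs_mul, abs_of_pos (by positivity : (0 : ℝ) < r ^ n),
      abs_of_pos (by positivity : (0 : ℝ) < r ^ n + r⁻¹ ^ n)]
    gcongr
    linarith
  refine not_summable_sq_two_cos_add_two_cos ?_ ?_ ?_ ?_ (summable_sq_of_abs_pow_mul_le hr hdecay)
  · convert exp_sub_ne_one_of_mul_exp_ne hθ using 2; push_cast; ring
  · convert exp_sub_ne_one_of_mul_exp_ne hψ using 2; push_cast; ring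
  · convert exp_sub_ne_one_of_mul_exp_ne hθψ' using 2; push_cast; ring
  · convert exp_sub_ne_one_of_mul_exp_ne hθψ using 2; push_cast; ring

/-- The power-sum sequence aₙ = (rⁿ + r⁻ⁿ)(2cos(nθ) + 2cos(nψ)) associated with a
non-degenerate integer polynomial with roots r^{±1}e^{±iθ}, r^{±1}e^{±iψ} takes
infinitely many values. -/
theorem power_sum_infinitely_many_values (r θ ψ : ℝ) (hr : 1 < r)
    (f : Polynomial ℤ)
    (hf : f.map (Int.castRingHom ℂ) =
      (X - C ((r : ℂ) * Complex.exp (θ * I))) * (X - C ((r : ℂ) * Complex.exp (-θ * I))) *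
      (X - C ((r : ℂ) * Complex.exp (ψ * I))) * (X - C ((r : ℂ) * Complex.exp (-ψ * I))) *
      (X - C ((r : ℂ)⁻¹ * Complex.exp (θ * I))) * (X - C ((r : ℂ)⁻¹ * Complex.exp (-θ * I))) *
      (X - C ((r : ℂ)⁻¹ * Complex.exp (ψ * I))) * (X - C ((r : ℂ)⁻¹ * Complex.exp (-ψ * I))))
    (hdist : ((r : ℂ) * Complex.exp (θ * I) ≠ (r : ℂ) * Complex.exp (-θ * I)) ∧
      ((r : ℂ) * Complex.exp (θ * I) ≠ (r : ℂ) * Complex.exp (ψ * I)) ∧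
      ((r : ℂ) * Complex.exp (θ * I) ≠ (r : ℂ) * Complex.exp (-ψ * I)) ∧
      ((r : ℂ) * Complex.exp (-θ * I) ≠ (r : ℂ) * Complex.exp (ψ * I)) ∧
      ((r : ℂ) * Complex.exp (-θ * I) ≠ (r : ℂ) * Complex.exp (-ψ * I)) ∧
      ((r : ℂ) * Complex.exp (ψ * I) ≠ (r : ℂ) * Complex.exp (-ψ * I)))
    (hND : ∀ lam mu : ℂ, (f.map (Int.castRingHom ℂ)).IsRoot lam →
      (f.map (Int.castRingHom ℂ)).IsRoot mu → lam ≠ mu →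
      ∀ n : ℕ, 0 < n → (lam / mu) ^ n ≠ 1) :
    (Set.range fun n : ℕ =>
      (r ^ n + r⁻¹ ^ n) * (2 * Real.cos (n * θ) + 2 * Real.cos (n * ψ))).Infinite :=
  power_sum_infinitely_many_values_general r θ ψ hr hdist
end

section
/- Let α ∈ ℂ be an algebraic integer with |α| = 1 that is a unimodular unit lying in a CM-field closed under complex conjugation whose Galois group contains complex conjugation in its centre. If α and all of its Galois conjugates have absolute value 1, then α is a root of unity. -/
/-!
Inside the number field `ℚ(α)`, the images of `α` under the complex embeddings are roots of its
minimal polynomial, hence of absolute value 1. The powers of `α` are then algebraic integers whose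
conjugates are bounded by 1, so their minimal polynomials have bounded integer coefficients and
only finitely many powers are distinct.
-/

open Polynomial IntermediateField

theorem minpoly.isRoot_map_int_apply {A B : Type*} [CommRing A] [CommRing B] (φ : A →+* B)
    (x : A) : ((minpoly ℤ x).map (Int.castRingHom B)).IsRoot (φ x) := by
  rw [IsRoot, ← algebraMap_int_eq, eval_map_algebraMap, ← φ.toIntAlgHom_apply,
    aeval_algHom_apply, minpoly.aeval, map_zero]

theorem NumberField.Embeddings.pow_eq_one_of_forall_root_norm_eq_one {K : Type*} [Field K]
    [NumberField K] {x : K} (hxi : IsIntegral ℤ x)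
    (h : ∀ z : ℂ, ((minpoly ℤ x).map (Int.castRingHom ℂ)).IsRoot z → ‖z‖ = 1) :
    ∃ n : ℕ, 0 < n ∧ x ^ n = 1 := by
  obtain ⟨n, hn, hxn⟩ :=
    pow_eq_one_of_norm_eq_one K ℂ hxi fun φ ↦ h _ (minpoly.isRoot_map_int_apply φ x)
  exact ⟨n, hn, hxn⟩

/-- Kronecker: an algebraic integer all of whose complex conjugates (roots of its minimal
polynomial) have absolute value exactly 1 is a root of unity. -/
theorem all_conjugates_on_unit_circle_root_of_unity (α : ℂ) (hint : IsIntegral ℤ α)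
    (habs : ∀ z : ℂ, ((minpoly ℤ α).map (Int.castRingHom ℂ)).IsRoot z → ‖z‖ = 1) :
    ∃ n : ℕ, 0 < n ∧ α ^ n = 1 := by
  have : FiniteDimensional ℚ ℚ⟮α⟯ := adjoin.finiteDimensional hint.tower_top
  have : NumberField ℚ⟮α⟯ := ⟨⟩
  have hgen := AdjoinSimple.algebraMap_gen ℚ α
  have hinj := (algebraMap ℚ⟮α⟯ ℂ).injective
  rw [← hgen, isIntegral_algebraMap_iff hinj] at hint
  rw [← hgen, minpoly.algebraMap_eq hinj] at habs
  obtain ⟨n, hn, hpow⟩ := NumberField.Embeddings.pow_eq_one_of_forall_root_norm_eq_one hint habs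
  exact ⟨n, hn, by rw [← hgen, ← map_pow, hpow, map_one]⟩
end
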